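/- arXiv:1509.03791 — 2 statements merged into one kernel-verified Lean document; each statement's English description precedes it below -/
import Mathlib

section
/- Let (T^{≤c}, T^{≥c})_{c∈ℝ} be a generalized t-structure on a triangulated category T, and set T^c := T^{≤c} ∩ T^{≥c}. Then the following two conditions are equivalent: (a) there exists a discrete subset Σ ⊆ ℝ with Σ = Σ + ℤ such that every object of T^c is a zero object for all c ∈ ℝ \ Σ; (b) for every c ∈ ℝ there exist a, b ∈ ℝ with a < c < b such that T^{<c} = T^{≤a} and T^{>c} = T^{≥b}. -/
/-!
Let `J ⊆ ℝ` be the set of `c` for which the heart `T^c` has a nonzero object; it is `ℤ`-periodic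
since `[1]` maps `T^{c+1}` onto `T^c`. If `X ∈ T^{<c}` but `X ∉ T^{≤a}`, the infimum `t ∈ (a, c)`
of the `e` with `X ∈ T^{≤e}` is attained by axiom (a), and in the triangle `X_{<t} → X → X_{≥t}`
the object `X_{≥t}` is nonzero and lies in `T^t`. So `T^{<c} = T^{≤a}` as soon as `(a, c)` misses
`J`, and dually for `T^{>c}`; this gives (a) ⇒ (b). Conversely, under (b) a nonzero object of
`T^x` with `x ∈ (a, b) \ {c}` would lie in `T^{≤a} ∩ T^{≥x}` or in `T^{≤x} ∩ T^{≥b}`, hence be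
zero; so `J` is discrete and can serve as `Σ`.
-/

open CategoryTheory CategoryTheory.Limits CategoryTheory.Pretriangulated

universe v u

/-- A classical t-structure on a (pre)triangulated category `T`, given by a pair of strictly
full subcategories `le = T^{≤0}` and `ge = T^{≥0}` (membership in the shifted subcategories
`T^{≤n} = T^{≤0}[-n]` and `T^{≥n} = T^{≥0}[-n]` is expressed by `X⟦n⟧ ∈ le`, resp.
`X⟦n⟧ ∈ ge`, which is legitimate since both classes are closed under isomorphism). -/
structure IsClassicalTStructure (T : Type u) [Category.{v} T] [HasZeroObject T]
    [Preadditive T] [HasShift T ℤ] [∀ n : ℤ, (shiftFunctor T n).Additive]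
    [Pretriangulated T] (le ge : Set T) : Prop where
  /-- `T^{≤0}` is closed under isomorphisms (strictly full). -/
  le_iso : ∀ ⦃X Y : T⦄, (X ≅ Y) → X ∈ le → Y ∈ le
  /-- `T^{≥0}` is closed under isomorphisms (strictly full). -/
  ge_iso : ∀ ⦃X Y : T⦄, (X ≅ Y) → X ∈ ge → Y ∈ ge
  /-- `T^{≤0} ⊆ T^{≤1}`. -/
  le_shift : ∀ ⦃X : T⦄, X ∈ le → (shiftFunctor T (1 : ℤ)).obj X ∈ le
  /-- `T^{≥1} ⊆ T^{≥0}`. -/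
  ge_shift : ∀ ⦃X : T⦄, (shiftFunctor T (1 : ℤ)).obj X ∈ ge → X ∈ ge
  /-- `Hom(T^{≤0}, T^{≥1}) = 0`. -/
  hom_zero : ∀ ⦃X Y : T⦄, X ∈ le → (shiftFunctor T (1 : ℤ)).obj Y ∈ ge →
    ∀ f : X ⟶ Y, f = 0
  /-- Every object fits in a distinguished triangle `X_{≤0} → X → X_{≥1} → X_{≤0}[1]`. -/
  exists_triangle : ∀ X : T,
    ∃ (A B : T) (f : A ⟶ X) (g : X ⟶ B) (h : B ⟶ (shiftFunctor T (1 : ℤ)).obj A),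
      Triangle.mk f g h ∈ (distTriang T) ∧ A ∈ le ∧ (shiftFunctor T (1 : ℤ)).obj B ∈ ge

/-- A generalized t-structure on a (pre)triangulated category `T`: a pair of families
`(le c)_{c∈ℝ} = (T^{≤c})` and `(ge c)_{c∈ℝ} = (T^{≥c})` of strictly full subcategories,
where `T^{<c} = ⋃_{c'<c} T^{≤c'}` and `T^{>c} = ⋃_{c'>c} T^{≥c'}`, satisfying:
(a) `T^{≤c} = ⋂_{c'>c} T^{≤c'}` and `T^{≥c} = ⋂_{c'<c} T^{≥c'}`;
(b) `T^{≤c+1} = T^{≤c}[-1]` and `T^{≥c+1} = T^{≥c}[-1]`;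
(c) `Hom(T^{<c}, T^{>c}) = 0`;
(d) every object fits in distinguished triangles `X_{≤c} → X → X_{>c} → ` and
`X_{<c} → X → X_{≥c} → `. -/
structure IsGeneralizedTStructure (T : Type u) [Category.{v} T] [HasZeroObject T]
    [Preadditive T] [HasShift T ℤ] [∀ n : ℤ, (shiftFunctor T n).Additive]
    [Pretriangulated T] (le ge : ℝ → Set T) : Prop where
  le_iso : ∀ (c : ℝ) ⦃X Y : T⦄, (X ≅ Y) → X ∈ le c → Y ∈ le c
  ge_iso : ∀ (c : ℝ) ⦃X Y : T⦄, (X ≅ Y) → X ∈ ge c → Y ∈ ge c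
  le_inter : ∀ c : ℝ, le c = ⋂ c' > c, le c'
  ge_inter : ∀ c : ℝ, ge c = ⋂ c' < c, ge c'
  le_shift : ∀ (c : ℝ) (X : T),
    X ∈ le (c + 1) ↔ (shiftFunctor T (1 : ℤ)).obj X ∈ le c
  ge_shift : ∀ (c : ℝ) (X : T),
    X ∈ ge (c + 1) ↔ (shiftFunctor T (1 : ℤ)).obj X ∈ ge c
  hom_zero : ∀ (c : ℝ) ⦃X Y : T⦄, (∃ c' < c, X ∈ le c') → (∃ c' > c, Y ∈ ge c') →
    ∀ f : X ⟶ Y, f = 0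
  exists_triangle_le : ∀ (X : T) (c : ℝ),
    ∃ (A B : T) (f : A ⟶ X) (g : X ⟶ B) (h : B ⟶ (shiftFunctor T (1 : ℤ)).obj A),
      Triangle.mk f g h ∈ (distTriang T) ∧ A ∈ le c ∧ ∃ c' > c, B ∈ ge c'
  exists_triangle_ge : ∀ (X : T) (c : ℝ),
    ∃ (A B : T) (f : A ⟶ X) (g : X ⟶ B) (h : B ⟶ (shiftFunctor T (1 : ℤ)).obj A),
      Triangle.mk f g h ∈ (distTriang T) ∧ (∃ c' < c, A ∈ le c') ∧ B ∈ ge c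

open Set Filter

theorem not_accPt_principal_iff_exists_Ioo {α : Type*} [TopologicalSpace α] [LinearOrder α]
    [OrderTopology α] [NoMaxOrder α] [NoMinOrder α] {x : α} {S : Set α} :
    ¬AccPt x (𝓟 S) ↔ ∃ a b, a < x ∧ x < b ∧ ∀ y ∈ Ioo a b, y ∈ S → y = x := by
  rw [accPt_iff_frequently, not_frequently, (nhds_basis_Ioo x).eventually_iff]
  simp only [Prod.exists, and_assoc, not_and, not_imp_not]

def heartSupport {T : Type u} [Category.{v} T] (le ge : ℝ → Set T) : Set ℝ :=
  {c | ∃ X : T, X ∈ le c ∧ X ∈ ge c ∧ ¬IsZero X}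

theorem heartSupport_subset {T : Type u} [Category.{v} T] {le ge : ℝ → Set T} {S : Set ℝ}
    (hS : ∀ c : ℝ, c ∉ S → ∀ X : T, X ∈ le c → X ∈ ge c → IsZero X) :
    heartSupport le ge ⊆ S := fun c ⟨X, hle, hge, hX⟩ => by
  by_contra hc
  exact hX (hS c hc X hle hge)

namespace IsGeneralizedTStructure

variable {T : Type u} [Category.{v} T] [HasZeroObject T] [Preadditive T]
    [HasShift T ℤ] [∀ n : ℤ, (shiftFunctor T n).Additive] [Pretriangulated T]
    {le ge : ℝ → Set T} (h : IsGeneralizedTStructure T le ge)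
include h

theorem le_mono {c c' : ℝ} (hcc' : c ≤ c') : le c ⊆ le c' := by
  rcases hcc'.eq_or_lt with rfl | hlt
  · exact subset_rfl
  · exact (h.le_inter c).trans_subset (biInter_subset_of_mem hlt)

theorem ge_anti {c c' : ℝ} (hcc' : c ≤ c') : ge c' ⊆ ge c := by
  rcases hcc'.eq_or_lt with rfl | hlt
  · exact subset_rfl
  · exact (h.ge_inter c').trans_subset (biInter_subset_of_mem hlt)

theorem mem_le_of_forall_gt {c : ℝ} {X : T} (hX : ∀ e > c, X ∈ le e) : X ∈ le c := by
  rw [h.le_inter c]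
  exact mem_iInter₂.2 hX

theorem mem_ge_of_forall_lt {c : ℝ} {X : T} (hX : ∀ e < c, X ∈ ge e) : X ∈ ge c := by
  rw [h.ge_inter c]
  exact mem_iInter₂.2 hX

theorem hom_eq_zero {u v : ℝ} (huv : u < v) {X Y : T} (hX : X ∈ le u) (hY : Y ∈ ge v)
    (f : X ⟶ Y) : f = 0 :=
  h.hom_zero ((u + v) / 2) ⟨u, by linarith, hX⟩ ⟨v, by linarith, hY⟩ f

theorem isZero_of_mem_le_of_mem_ge {u v : ℝ} (huv : u < v) {X : T} (hle : X ∈ le u)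
    (hge : X ∈ ge v) : IsZero X :=
  (IsZero.iff_id_eq_zero X).2 (h.hom_eq_zero huv hle hge (𝟙 X))

theorem shift_one_mem_le {c : ℝ} {X : T} (hX : X ∈ le c) :
    (shiftFunctor T (1 : ℤ)).obj X ∈ le (c - 1) :=
  (h.le_shift (c - 1) X).1 (by rwa [sub_add_cancel])

theorem shift_neg_one_mem_le {c : ℝ} {X : T} (hX : X ∈ le c) :
    (shiftFunctor T (-1 : ℤ)).obj X ∈ le (c + 1) :=
  (h.le_shift c _).2 (h.le_iso c (shiftNegShift X (1 : ℤ)).symm hX)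

theorem shift_neg_one_mem_ge {c : ℝ} {X : T} (hX : X ∈ ge c) :
    (shiftFunctor T (-1 : ℤ)).obj X ∈ ge (c + 1) :=
  (h.ge_shift c _).2 (h.ge_iso c (shiftNegShift X (1 : ℤ)).symm hX)

theorem mem_le_of_hom_eq_zero {c : ℝ} {X : T}
    (hX : ∀ Y : T, (∃ d > c, Y ∈ ge d) → ∀ f : X ⟶ Y, f = 0) : X ∈ le c := by
  obtain ⟨A, B, f, g, k, hT, hA, d, hd, hB⟩ := h.exists_triangle_le X c
  obtain ⟨t, ht⟩ := Triangle.yoneda_exact₃ _ hT (𝟙 B)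
    (hX B ⟨d, hd, hB⟩ _)
  have hB0 : IsZero B := (IsZero.iff_id_eq_zero B).2 <| by
    rw [ht, show t = 0 from h.hom_eq_zero (by linarith) (h.shift_one_mem_le hA) hB t, comp_zero]
    rfl
  have : IsIso f := (Triangle.isZero₃_iff_isIso₁ _ hT).1 hB0
  exact h.le_iso c (asIso f) hA

theorem mem_ge_of_hom_eq_zero {c : ℝ} {Y : T}
    (hY : ∀ X : T, (∃ d < c, X ∈ le d) → ∀ f : X ⟶ Y, f = 0) : Y ∈ ge c := by
  obtain ⟨A, B, f, g, k, hT, ⟨d, hd, hA⟩, hB⟩ := h.exists_triangle_ge Y c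
  obtain ⟨t, ht⟩ := Triangle.coyoneda_exact₂ _ (inv_rot_of_distTriang _ hT) (𝟙 A)
    (hY A ⟨d, hd, hA⟩ _)
  have hA0 : IsZero A := (IsZero.iff_id_eq_zero A).2 <| by
    rw [ht, show t = 0 from h.hom_eq_zero (by linarith) hA (h.shift_neg_one_mem_ge hB) t, zero_comp]
    rfl
  have : IsIso g := (Triangle.isZero₁_iff_isIso₂ _ hT).1 hA0
  exact h.ge_iso c (asIso g).symm hB

theorem obj₃_mem_le {p t : ℝ} (hpt : p ≤ t) {A X B : T} {f : A ⟶ X} {g : X ⟶ B}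
    {k : B ⟶ (shiftFunctor T (1 : ℤ)).obj A} (hT : Triangle.mk f g k ∈ distTriang T)
    (hA : A ∈ le p) (hX : X ∈ le t) : B ∈ le t := by
  refine h.mem_le_of_hom_eq_zero fun Z ⟨d, hd, hZ⟩ u => ?_
  obtain ⟨v, hv⟩ := Triangle.yoneda_exact₃ _ hT u (h.hom_eq_zero hd hX hZ _)
  rw [hv, show v = 0 from h.hom_eq_zero (by linarith) (h.shift_one_mem_le hA) hZ v, comp_zero]
  rfl

theorem obj₁_mem_ge {r q : ℝ} (hrq : r ≤ q) {A Y B : T} {f : A ⟶ Y} {g : Y ⟶ B}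
    {k : B ⟶ (shiftFunctor T (1 : ℤ)).obj A} (hT : Triangle.mk f g k ∈ distTriang T)
    (hY : Y ∈ ge r) (hB : B ∈ ge q) : A ∈ ge r := by
  refine h.mem_ge_of_hom_eq_zero fun W ⟨d, hd, hW⟩ u => ?_
  obtain ⟨v, hv⟩ := Triangle.coyoneda_exact₂ _ (inv_rot_of_distTriang _ hT) u
    (h.hom_eq_zero hd hW hY _)
  rw [hv, show v = 0 from h.hom_eq_zero (by linarith) hW (h.shift_neg_one_mem_ge hB) v, zero_comp]
  rfl

theorem mem_heartSupport_of_isLeast {X : T} {t : ℝ} (ht : IsLeast {e | X ∈ le e} t) :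
    t ∈ heartSupport le ge := by
  obtain ⟨A, B, f, g, k, hT, ⟨p, hpt, hA⟩, hB⟩ := h.exists_triangle_ge X t
  refine ⟨B, h.obj₃_mem_le hpt.le hT hA ht.1, hB, fun hB0 => ?_⟩
  have : IsIso f := (Triangle.isZero₃_iff_isIso₁ _ hT).1 hB0
  exact (ht.2 (h.le_iso p (asIso f) hA)).not_gt hpt

theorem mem_heartSupport_of_isGreatest {Y : T} {r : ℝ} (hr : IsGreatest {e | Y ∈ ge e} r) :
    r ∈ heartSupport le ge := by
  obtain ⟨A, B, f, g, k, hT, hA, q, hrq, hB⟩ := h.exists_triangle_le Y r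
  refine ⟨A, hA, h.obj₁_mem_ge hrq.le hT hr.1 hB, fun hA0 => ?_⟩
  have : IsIso g := (Triangle.isZero₁_iff_isIso₂ _ hT).1 hA0
  exact (hr.2 (h.ge_iso q (asIso g).symm hB)).not_gt hrq

theorem exists_isLeast_le {X : T} {a c : ℝ} (hX : X ∈ le c) (hXa : X ∉ le a) :
    ∃ t, IsLeast {e | X ∈ le e} t ∧ a < t := by
  have hlb : a ∈ lowerBounds {e | X ∈ le e} := fun e he =>
    le_of_not_gt fun hea => hXa (h.le_mono hea.le he)
  have hne : Set.Nonempty {e | X ∈ le e} := ⟨c, hX⟩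
  have hmem : X ∈ le (sInf {e | X ∈ le e}) := h.mem_le_of_forall_gt fun e he => by
    obtain ⟨e', he', he'e⟩ := (csInf_lt_iff ⟨a, hlb⟩ hne).1 he
    exact h.le_mono he'e.le he'
  refine ⟨_, ⟨hmem, fun e he => csInf_le ⟨a, hlb⟩ he⟩, ?_⟩
  exact (le_csInf hne hlb).lt_of_ne fun hat => hXa (hat ▸ hmem)

theorem exists_isGreatest_ge {Y : T} {b c : ℝ} (hY : Y ∈ ge c) (hYb : Y ∉ ge b) :
    ∃ r, IsGreatest {e | Y ∈ ge e} r ∧ r < b := by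
  have hub : b ∈ upperBounds {e | Y ∈ ge e} := fun e he =>
    le_of_not_gt fun hbe => hYb (h.ge_anti hbe.le he)
  have hne : Set.Nonempty {e | Y ∈ ge e} := ⟨c, hY⟩
  have hmem : Y ∈ ge (sSup {e | Y ∈ ge e}) := h.mem_ge_of_forall_lt fun e he => by
    obtain ⟨e', he', hee'⟩ := (lt_csSup_iff ⟨b, hub⟩ hne).1 he
    exact h.ge_anti hee'.le he'
  refine ⟨_, ⟨hmem, fun e he => le_csSup ⟨b, hub⟩ he⟩, ?_⟩
  exact (csSup_le hne hub).lt_of_ne fun hrb => hYb (hrb ▸ hmem)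

theorem setOf_exists_lt_mem_le_eq {a c : ℝ} (hac : a < c)
    (hfree : ∀ x ∈ Ioo a c, x ∉ heartSupport le ge) :
    {X : T | ∃ c' < c, X ∈ le c'} = le a := by
  refine Subset.antisymm ?_ fun X hX => ⟨a, hac, hX⟩
  rintro X ⟨c', hc', hX⟩
  by_contra hXa
  obtain ⟨t, ht, hat⟩ := h.exists_isLeast_le hX hXa
  exact hfree t ⟨hat, (ht.2 hX).trans_lt hc'⟩ (h.mem_heartSupport_of_isLeast ht)

theorem setOf_exists_gt_mem_ge_eq {b c : ℝ} (hcb : c < b)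
    (hfree : ∀ x ∈ Ioo c b, x ∉ heartSupport le ge) :
    {X : T | ∃ c' > c, X ∈ ge c'} = ge b := by
  refine Subset.antisymm ?_ fun X hX => ⟨b, hcb, hX⟩
  rintro Y ⟨c', hc', hY⟩
  by_contra hYb
  obtain ⟨r, hr, hrb⟩ := h.exists_isGreatest_ge hY hYb
  exact hfree r ⟨hc'.trans_le (hr.2 hY), hrb⟩ (h.mem_heartSupport_of_isGreatest hr)

theorem eq_of_mem_heartSupport {a b c x : ℝ} (hx : x ∈ Ioo a b) (hxS : x ∈ heartSupport le ge)
    (hle : {X : T | ∃ c' < c, X ∈ le c'} = le a) (hge : {X : T | ∃ c' > c, X ∈ ge c'} = ge b) :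
    x = c := by
  obtain ⟨X, hXle, hXge, hX⟩ := hxS
  by_contra hxc
  rcases lt_or_gt_of_ne hxc with hlt | hgt
  · exact hX (h.isZero_of_mem_le_of_mem_ge hx.1 (hle ▸ ⟨x, hlt, hXle⟩) hXge)
  · exact hX (h.isZero_of_mem_le_of_mem_ge hx.2 hXle (hge ▸ ⟨x, hgt, hXge⟩))

theorem add_one_mem_heartSupport_iff {c : ℝ} :
    c + 1 ∈ heartSupport le ge ↔ c ∈ heartSupport le ge := by
  constructor
  · rintro ⟨X, hle, hge, hX⟩
    refine ⟨_, (h.le_shift c X).1 hle, (h.ge_shift c X).1 hge, fun hX1 => hX ?_⟩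
    exact ((shiftFunctor T (-1 : ℤ)).map_isZero hX1).of_iso (shiftShiftNeg X (1 : ℤ)).symm
  · rintro ⟨X, hle, hge, hX⟩
    refine ⟨_, h.shift_neg_one_mem_le hle, h.shift_neg_one_mem_ge hge, fun hX1 => hX ?_⟩
    exact ((shiftFunctor T (1 : ℤ)).map_isZero hX1).of_iso (shiftNegShift X (1 : ℤ)).symm

theorem add_int_mem_heartSupport_iff {c : ℝ} (n : ℤ) :
    c + n ∈ heartSupport le ge ↔ c ∈ heartSupport le ge := by
  induction n using Int.induction_on with
  | zero => simp
  | succ k ih =>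
    rw [← ih, ← h.add_one_mem_heartSupport_iff (c := c + ((k : ℤ) : ℝ))]
    congr! 1
    push_cast
    ring
  | pred k ih =>
    rw [← ih, ← h.add_one_mem_heartSupport_iff (c := c + ((-(k : ℤ) - 1 : ℤ) : ℝ))]
    congr! 1
    push_cast
    ring

end IsGeneralizedTStructure

/-- Let `(T^{≤c}, T^{≥c})_{c∈ℝ}` be a generalized t-structure on a triangulated
category `T`, and set `T^c := T^{≤c} ∩ T^{≥c}`. The following are equivalent:
(a) there is a discrete subset `S ⊆ ℝ` (no accumulation point in `ℝ`) with `S = S + ℤ`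
such that every object of `T^c` is zero for all `c ∉ S`;
(b) for every `c ∈ ℝ` there exist `a < c < b` with `T^{<c} = T^{≤a}` and `T^{>c} = T^{≥b}`. -/
theorem stmt6 {T : Type u} [Category.{v} T] [HasZeroObject T] [Preadditive T]
    [HasShift T ℤ] [∀ n : ℤ, (shiftFunctor T n).Additive] [Pretriangulated T]
    (le ge : ℝ → Set T) (h : IsGeneralizedTStructure T le ge) :
    (∃ S : Set ℝ, (∀ x : ℝ, ¬ AccPt x (Filter.principal S)) ∧
        S = {x : ℝ | ∃ s ∈ S, ∃ n : ℤ, x = s + n} ∧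
        ∀ c : ℝ, c ∉ S → ∀ X : T, X ∈ le c → X ∈ ge c → IsZero X) ↔
      (∀ c : ℝ, ∃ a b : ℝ, a < c ∧ c < b ∧
        {X : T | ∃ c' < c, X ∈ le c'} = le a ∧
        {X : T | ∃ c' > c, X ∈ ge c'} = ge b) := by
  constructor
  · rintro ⟨S, hdisc, -, hzero⟩ c
    obtain ⟨a, b, hac, hcb, hS⟩ := not_accPt_principal_iff_exists_Ioo.1 (hdisc c)
    have hfree : ∀ x ∈ Ioo a b, x ≠ c → x ∉ heartSupport le ge := fun x hx hxc hxJ =>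
      hxc (hS x hx (heartSupport_subset hzero hxJ))
    exact ⟨a, b, hac, hcb,
      h.setOf_exists_lt_mem_le_eq hac fun x hx => hfree x ⟨hx.1, hx.2.trans hcb⟩ hx.2.ne,
      h.setOf_exists_gt_mem_ge_eq hcb fun x hx => hfree x ⟨hac.trans hx.1, hx.2⟩ hx.1.ne'⟩
  · intro hb
    refine ⟨heartSupport le ge, fun x => ?_, ?_, fun c hc X hle hge => ?_⟩
    · obtain ⟨a, b, hax, hxb, hle, hge⟩ := hb x
      exact not_accPt_principal_iff_exists_Ioo.2
        ⟨a, b, hax, hxb, fun y hy hyJ => h.eq_of_mem_heartSupport hy hyJ hle hge⟩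
    · ext x
      refine ⟨fun hx => ⟨x, hx, 0, by simp⟩, ?_⟩
      rintro ⟨s, hs, n, rfl⟩
      exact (h.add_int_mem_heartSupport_iff n).2 hs
    · by_contra hX
      exact hc ⟨X, hle, hge, hX⟩
end

section
/- Let (M, M̌) and (N, Ň) be bordered spaces and f : M → N a morphism of bordered spaces (i.e. the first projection restricted to the closure Γ̄_f of the graph of f in M̌ × Ň is proper). Let Z ⊆ M and W ⊆ N be locally closed subsets with f(Z) ⊆ W, and let Z̄ denote the closure of Z in M̌ and W̄ the closure of W in Ň. Then the restriction f|_Z : Z → W is a morphism of bordered spaces (Z, Z̄) → (W, W̄); that is, the projection to Z̄ restricted to the closure (taken in Z̄ × W̄) of the graph of f|_Z is a proper map. -/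
/-- Let `(M, M̌)` and `(N, Ň)` be bordered spaces and `f : M → N` a morphism
of bordered spaces. Let `Z ⊆ M` and `W ⊆ N` be locally closed subsets with `f(Z) ⊆ W`,
and let `Z̄` (resp. `W̄`) denote the closure of `Z` in `M̌` (resp. of `W` in `Ň`). Then the
restriction `f|_Z : Z → W` is a morphism of bordered spaces `(Z, Z̄) → (W, W̄)`: the
projection to `Z̄` restricted to the closure (taken in `Z̄ × W̄`) of the graph of `f|_Z`
is a proper map. -/
theorem stmt16 {Mc Nc : Type*} [TopologicalSpace Mc] [TopologicalSpace Nc]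
    [T2Space Mc] [T2Space Nc] [LocallyCompactSpace Mc] [LocallyCompactSpace Nc]
    {M : Set Mc} {N : Set Nc} (hM : IsOpen M) (hN : IsOpen N)
    (f : M → N) (hf : Continuous f)
    (hmor : IsProperMap
      (fun p : ↥(closure (Set.range fun x : M => ((x : Mc), ((f x : Nc))))) =>
        (p : Mc × Nc).1))
    {Z : Set Mc} {W : Set Nc} (hZ : IsLocallyClosed Z) (hZM : Z ⊆ M)
    (hW : IsLocallyClosed W) (hWN : W ⊆ N)
    (hfZW : ∀ x : M, (x : Mc) ∈ Z → (f x : Nc) ∈ W) :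
    IsProperMap
      (fun p : ↥(closure {q : ↥(closure Z) × ↥(closure W) |
          ∃ x : M, (x : Mc) ∈ Z ∧ (q.1 : Mc) = (x : Mc) ∧ (q.2 : Nc) = (f x : Nc)}) =>
        (p : ↥(closure Z) × ↥(closure W)).1) := by
  haveI : LocallyCompactSpace ↥(closure Z) := isClosed_closure.locallyCompactSpace
  set Γ : Set (Mc × Nc) := closure (Set.range fun x : M => ((x : Mc), ((f x : Nc)))) with hΓ
  set S : Set (↥(closure Z) × ↥(closure W)) :=
    {q : ↥(closure Z) × ↥(closure W) |
      ∃ x : M, (x : Mc) ∈ Z ∧ (q.1 : Mc) = (x : Mc) ∧ (q.2 : Nc) = (f x : Nc)} with hS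
  -- the closed embedding into Mc × Nc
  have hj : Topology.IsClosedEmbedding
      (fun q : ↥(closure Z) × ↥(closure W) => ((q.1 : Mc), (q.2 : Nc))) :=
by
    have hp : IsProperMap (Prod.map (Subtype.val : ↥(closure Z) → Mc)
        (Subtype.val : ↥(closure W) → Nc)) :=
      isClosed_closure.isClosedEmbedding_subtypeVal.isProperMap.prodMap
        isClosed_closure.isClosedEmbedding_subtypeVal.isProperMap
    exact Topology.IsClosedEmbedding.of_continuous_injective_isClosedMap hp.continuous
      (Subtype.val_injective.prodMap Subtype.val_injective) hp.isClosedMap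
  have he : Topology.IsClosedEmbedding
      (fun p : ↥(closure S) => (((p : ↥(closure Z) × ↥(closure W)).1 : Mc),
        ((p : ↥(closure Z) × ↥(closure W)).2 : Nc))) :=
    hj.comp isClosed_closure.isClosedEmbedding_subtypeVal
  -- closure S maps into Γ
  have hsub : ∀ p : ↥(closure S),
      (((p : ↥(closure Z) × ↥(closure W)).1 : Mc),
        ((p : ↥(closure Z) × ↥(closure W)).2 : Nc)) ∈ Γ := by
    intro p
    have h1 : (fun q : ↥(closure Z) × ↥(closure W) => ((q.1 : Mc), (q.2 : Nc))) '' closure S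
        ⊆ closure ((fun q : ↥(closure Z) × ↥(closure W) => ((q.1 : Mc), (q.2 : Nc))) '' S) :=
      image_closure_subset_closure_image hj.continuous
    have h2 : (fun q : ↥(closure Z) × ↥(closure W) => ((q.1 : Mc), (q.2 : Nc))) '' S
        ⊆ Set.range fun x : M => ((x : Mc), ((f x : Nc))) := by
      rintro _ ⟨q, ⟨x, hx, h1', h2'⟩, rfl⟩
      exact ⟨x, by simp [h1', h2']⟩
    have := h1 ⟨p.val, p.property, rfl⟩
    exact closure_mono h2 this
  rw [isProperMap_iff_isCompact_preimage]
  refine ⟨(continuous_fst.comp continuous_subtype_val), fun K hK => ?_⟩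
  rw [he.isCompact_iff]
  have hKc : IsCompact ((Subtype.val : ↥(closure Z) → Mc) '' K) :=
    hK.image continuous_subtype_val
  -- the compact set in Mc × Nc
  have hC : IsCompact ((Subtype.val : ↥Γ → Mc × Nc) ''
      ((fun p : ↥Γ => (p : Mc × Nc).1) ⁻¹' ((Subtype.val : ↥(closure Z) → Mc) '' K))) :=
    (hmor.isCompact_preimage hKc).image continuous_subtype_val
  refine hC.of_isClosed_subset (he.isClosedMap _ ?_) ?_
  · exact (hK.isClosed.preimage (continuous_fst.comp continuous_subtype_val))
  · rintro _ ⟨p, hp, rfl⟩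
    exact ⟨⟨_, hsub p⟩, ⟨(p : ↥(closure Z) × ↥(closure W)).1, hp, rfl⟩, rfl⟩
end
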